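/- (Projection inequality, eq. (34).) Let m ≥ 1, s ∈ {1,…,m}, η > 0, and v, α* ∈ ℝ^m. If α* ∈ ℙ_s(α* − η·v), then for every α ∈ ℝ^m with ‖α‖₀ ≤ s one has −‖α* − α‖² ≤ 2η·⟨α − α*, v⟩. -/

import Mathlib

noncomputable section

open Finset Matrix

/-- Euclidean (ℓ₂) norm of a vector in ℝ^m. -/
def enorm' {m : ℕ} (v : Fin m → ℝ) : ℝ := Real.sqrt (∑ i, (v i) ^ 2)

/-- The zero "norm": number of nonzero entries. -/
def zeroNorm {m : ℕ} (α : Fin m → ℝ) : ℕ := {i | α i ≠ 0}.ncard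

/-- The soft-margin loss ℓ_{cC}. -/
def softLoss (c C t : ℝ) : ℝ := if 0 ≤ t then C * t ^ 2 / 2 else c * t ^ 2 / 2

/-- The dual penalty h_{cC}. -/
def hLoss (c C t : ℝ) : ℝ := if 0 ≤ t then t ^ 2 / (2 * C) else t ^ 2 / (2 * c)

/-- The matrix Q whose j-th column is y_j · x_j. -/
def Qmat {m n : ℕ} (x : Fin m → Fin n → ℝ) (y : Fin m → ℝ) : Matrix (Fin n) (Fin m) ℝ :=
  Matrix.of fun i j => y j * x j i

/-- The diagonal matrix E(α). -/
def Emat {m : ℕ} (c C : ℝ) (α : Fin m → ℝ) : Matrix (Fin m) (Fin m) ℝ :=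
  Matrix.diagonal fun i => if 0 ≤ α i then 1 / C else 1 / c

/-- The Hessian H(α) = QᵀQ + E(α). -/
def Hmat {m n : ℕ} (c C : ℝ) (x : Fin m → Fin n → ℝ) (y : Fin m → ℝ) (α : Fin m → ℝ) :
    Matrix (Fin m) (Fin m) ℝ :=
  (Qmat x y)ᵀ * Qmat x y + Emat c C α

/-- The dual objective D(α) = (1/2)‖Qα‖² + (1/2)⟨E(α)α, α⟩ − ⟨1, α⟩. -/
def Dfun {m n : ℕ} (c C : ℝ) (x : Fin m → Fin n → ℝ) (y : Fin m → ℝ) (α : Fin m → ℝ) : ℝ :=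
  (1 / 2) * ∑ i, ((Qmat x y).mulVec α i) ^ 2
    + (1 / 2) * ∑ i, ((Emat c C α).mulVec α i) * α i
    - ∑ i, α i

/-- g(α, b) = H(α)α − 1 + b·y. -/
def gfun {m n : ℕ} (c C : ℝ) (x : Fin m → Fin n → ℝ) (y : Fin m → ℝ)
    (α : Fin m → ℝ) (b : ℝ) : Fin m → ℝ :=
  (Hmat c C x y α).mulVec α - (fun _ => (1 : ℝ)) + b • y

/-- The hard-thresholding operator ℙ_s(α): minimizers of ‖u − α‖ over ‖u‖₀ ≤ s. -/
def hardThr {m : ℕ} (s : ℕ) (α : Fin m → ℝ) : Set (Fin m → ℝ) :=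
  {u | zeroNorm u ≤ s ∧ ∀ v : Fin m → ℝ, zeroNorm v ≤ s → enorm' (u - α) ≤ enorm' (v - α)}

/-- Feasibility for the sparsity constrained problem (SSVM). -/
def feasible {m : ℕ} (y : Fin m → ℝ) (s : ℕ) (α : Fin m → ℝ) : Prop :=
  ∑ i, α i * y i = 0 ∧ zeroNorm α ≤ s

/-- (α, b) is an η-stationary point of (SSVM). -/
def etaStat {m n : ℕ} (c C : ℝ) (x : Fin m → Fin n → ℝ) (y : Fin m → ℝ) (s : ℕ) (η : ℝ)
    (α : Fin m → ℝ) (b : ℝ) : Prop :=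
  α ∈ hardThr s (α - η • gfun c C x y α b) ∧ ∑ i, α i * y i = 0

/-- The family T_s(α) of index sets of s largest entries in magnitude. -/
def Tsets {m : ℕ} (s : ℕ) (α : Fin m → ℝ) : Set (Finset (Fin m)) :=
  {T | T.card = s ∧ ∀ i ∈ T, ∀ j ∉ T, |α j| ≤ |α i|}

/-- The s-th largest entry of (|α₁|, …, |α_m|). -/
def sthLargest {m : ℕ} (s : ℕ) (α : Fin m → ℝ) : ℝ :=
  sSup {t : ℝ | s ≤ {i | t ≤ |α i|}.ncard}

/-- Euclidean distance between pairs (α, b) and (α', b') in ℝ^m × ℝ. -/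
def pairDist {m : ℕ} (α : Fin m → ℝ) (b : ℝ) (α' : Fin m → ℝ) (b' : ℝ) : ℝ :=
  Real.sqrt ((∑ i, (α i - α' i) ^ 2) + (b - b') ^ 2)

/-- Spectral (operator) norm of a matrix w.r.t. Euclidean norms. -/
def specNorm {m n : ℕ} (Q : Matrix (Fin n) (Fin m) ℝ) : ℝ :=
  ‖LinearMap.toContinuousLinearMap (Matrix.toEuclideanLin Q)‖

theorem neg_sq_norm_sub_le_of_norm_le {E : Type*} [NormedAddCommGroup E] [InnerProductSpace ℝ E]
    {u a v : E} {η : ℝ} (h : ‖u - (u - η • v)‖ ≤ ‖a - (u - η • v)‖) :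
    -‖u - a‖ ^ 2 ≤ 2 * η * inner ℝ (a - u) v := by
  have hsq : ‖η • v‖ ^ 2 ≤ ‖(a - u) + η • v‖ ^ 2 := by
    rw [sub_sub_cancel, sub_sub_eq_add_sub, add_sub_right_comm] at h
    exact pow_le_pow_left₀ (norm_nonneg _) h 2
  rw [norm_add_sq_real, inner_smul_right] at hsq
  rw [norm_sub_rev]
  linarith

theorem enorm'_eq_norm_toLp {m : ℕ} (w : Fin m → ℝ) :
    enorm' w = ‖(WithLp.toLp 2 w : EuclideanSpace ℝ (Fin m))‖ := by
  simp [enorm', EuclideanSpace.norm_eq]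

theorem sum_mul_eq_inner_toLp {m : ℕ} (w v : Fin m → ℝ) :
    ∑ i, w i * v i =
      inner ℝ (WithLp.toLp 2 w : EuclideanSpace ℝ (Fin m)) (WithLp.toLp 2 v) := by
  simp [PiLp.inner_apply, mul_comm]

theorem stmt_14_general {m : ℕ} (s : ℕ)
    (η : ℝ) (v αstar : Fin m → ℝ)
    (hproj : αstar ∈ hardThr s (αstar - η • v)) :
    ∀ α : Fin m → ℝ, zeroNorm α ≤ s →
      - (enorm' (αstar - α)) ^ 2 ≤ 2 * η * ∑ i, (α i - αstar i) * v i := by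
  intro α hα
  have hmin := hproj.2 α hα
  have hinner := sum_mul_eq_inner_toLp (α - αstar) v
  simp only [enorm'_eq_norm_toLp, Pi.sub_apply, WithLp.toLp_sub, WithLp.toLp_smul]
    at hmin hinner ⊢
  rw [hinner]
  exact neg_sq_norm_sub_le_of_norm_le hmin

/-- projection inequality. -/
theorem stmt_14 {m : ℕ} (hm : 1 ≤ m) (s : ℕ) (hs1 : 1 ≤ s) (hs2 : s ≤ m)
    (η : ℝ) (hη : 0 < η) (v αstar : Fin m → ℝ)
    (hproj : αstar ∈ hardThr s (αstar - η • v)) :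
    ∀ α : Fin m → ℝ, zeroNorm α ≤ s →
      - (enorm' (αstar - α)) ^ 2 ≤ 2 * η * ∑ i, (α i - αstar i) * v i :=
  stmt_14_general s η v αstar hproj
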